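/- Let k be a field and d ≥ 0. The k-algebra homomorphism h : k[a_1,…,a_d, b_1,…,b_d, a′_1,…,a′_{d+1}, b′_1,…,b′_{d+1}] → B_d = k[a_1,…,a_d, b_1,…,b_d, c] defined by h(a_i) = a_i, h(b_i) = b_i for 1 ≤ i ≤ d, and h(a′_i) = a_{i−1} − c·a_i, h(b′_i) = b_{i−1} − c·b_i for 1 ≤ i ≤ d+1 (conventions a_0 = b_0 = b_{d+1} = 0 and a_{d+1} = 1 in B_d, so h(a′_{d+1}) = a_d − c and h(b′_{d+1}) = b_d) is surjective. -/
import Mathlib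


open MvPolynomial

/-- Variables of `k[a_1,…,a_d, b_1,…,b_d, a'_1,…,a'_{d+1}, b'_1,…,b'_{d+1}]`:
`Sum.inl (Sum.inl p)` is `a_{p+1}`, `Sum.inl (Sum.inr p)` is `b_{p+1}`,
`Sum.inr (Sum.inl p)` is `a'_{p+1}`, `Sum.inr (Sum.inr p)` is `b'_{p+1}`. -/
abbrev SVar (d : ℕ) : Type := (Fin d ⊕ Fin d) ⊕ (Fin (d + 1) ⊕ Fin (d + 1))

/-- Variables of `B_d = k[a_1,…,a_d, b_1,…,b_d, c]`. -/
abbrev BVar (d : ℕ) : Type := (Fin d ⊕ Fin d) ⊕ Unit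

/-- `a_m` in `B_d` with conventions `a_0 = 0`, `a_{d+1} = 1`. -/
noncomputable def aBm (k : Type) [Field k] (d : ℕ) (m : ℕ) : MvPolynomial (BVar d) k :=
  if h : 1 ≤ m ∧ m ≤ d then X (Sum.inl (Sum.inl (⟨m - 1, by omega⟩ : Fin d)))
  else if m = d + 1 then 1 else 0

/-- `b_m` in `B_d` with conventions `b_0 = 0`, `b_{d+1} = 0`. -/
noncomputable def bBm (k : Type) [Field k] (d : ℕ) (m : ℕ) : MvPolynomial (BVar d) k :=
  if h : 1 ≤ m ∧ m ≤ d then X (Sum.inl (Sum.inr (⟨m - 1, by omega⟩ : Fin d)))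
  else 0

/-- The map `h : k[a, b, a', b'] → B_d`: `a_i ↦ a_i`, `b_i ↦ b_i`,
`a'_i ↦ a_{i-1} - c·a_i`, `b'_i ↦ b_{i-1} - c·b_i` (with `a_0 = b_0 = b_{d+1} = 0`,
`a_{d+1} = 1` in `B_d`). -/
noncomputable def hmap (k : Type) [Field k] (d : ℕ) :
    MvPolynomial (SVar d) k →ₐ[k] MvPolynomial (BVar d) k :=
  aeval (fun v => match v with
    | Sum.inl (Sum.inl p) => X (Sum.inl (Sum.inl p))
    | Sum.inl (Sum.inr p) => X (Sum.inl (Sum.inr p))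
    | Sum.inr (Sum.inl p) => aBm k d p - X (Sum.inr ()) * aBm k d ((p : ℕ) + 1)
    | Sum.inr (Sum.inr p) => bBm k d p - X (Sum.inr ()) * bBm k d ((p : ℕ) + 1))

/-- `h` is surjective (the map `φ_d × ψ_d : Y_d → V_d × V_{d+1}` is a
closed immersion). -/
theorem statement13 (k : Type) [Field k] (d : ℕ) :
    Function.Surjective (hmap k d) := by
  rw [← AlgHom.range_eq_top, _root_.eq_top_iff, ← MvPolynomial.adjoin_range_X,
    Algebra.adjoin_le_iff]
  rintro _ ⟨v, rfl⟩
  match v with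
  | Sum.inl (Sum.inl p) => exact ⟨X (Sum.inl (Sum.inl p)), by simp [hmap]⟩
  | Sum.inl (Sum.inr p) => exact ⟨X (Sum.inl (Sum.inr p)), by simp [hmap]⟩
  | Sum.inr () =>
    match d with
    | 0 =>
      refine ⟨-X (Sum.inr (Sum.inl 0)), ?_⟩
      simp [hmap, aBm]
    | n + 1 =>
      refine ⟨X (Sum.inl (Sum.inl ⟨n, by omega⟩)) -
        X (Sum.inr (Sum.inl ⟨n + 1, by omega⟩)), ?_⟩
      simp [hmap, aBm]
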